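/- For every positive integer k, the quadratic polynomial f(j) = j^2 - 3kj - (3k - 3) has no integer root j with 0 < j < 3k. -/

import Mathlib

theorem sq_sub_mul_sub_ne_zero {R : Type*} [CommRing R] [LinearOrder R] [IsStrictOrderedRing R]
    {a c x : R} (hc : 0 ≤ c) (hx : 0 < x) (hxa : x < a) : x ^ 2 - a * x - c ≠ 0 := by
  intro h
  have hpos : 0 < x * (a - x) := mul_pos hx (sub_pos.mpr hxa)
  have hroot : x * (a - x) = -c := by linear_combination -h
  linarith

theorem stmt_4 (k j : ℤ) (hk : 0 < k) (hj : 0 < j) (hj' : j < 3*k) :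
    j^2 - 3*k*j - (3*k - 3) ≠ 0 :=
  sq_sub_mul_sub_ne_zero (by omega) hj hj'
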